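/- Let m = 5, p, q ∈ ℕ, and λ ∈ ℂ. Let W_{p,q,λ,0} denote the set of vertex functions f on C_5^N supported in Σ_{p,q} such that A_- f = 0, R_1 f = λ • f, and A_0 f = μ • f for some μ ∈ ℂ. Let G denote the set of operators consisting of A_0 together with all operators of the form g ↦ 𝟙_{Σ_{p',q'}} · (A_+ g) for p', q' ∈ ℕ (the subadjacencies of A_+), and let V_{p,q,λ} be the ℂ-linear span of all vectors (T_1 ∘ T_2 ∘ ⋯ ∘ T_j) f with j ∈ ℕ, each T_i ∈ G, and f ∈ W_{p,q,λ,0}. Then V_{p,q,λ} is invariant under the adjacency operator: for every g ∈ V_{p,q,λ}, A g ∈ V_{p,q,λ}. -/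

import Mathlib

open Finset

/-- The standard generator `e_k` of `(ZMod m)^N`: equal to `1` in coordinate `k`,
`0` elsewhere. -/
def eV (N m : ℕ) (k : Fin N) : Fin N → ZMod m :=
  fun j => if j = k then 1 else 0

/-- Adjacency in the Cayley graph `C_m^N`: `v ∼ w` iff `w = v + e_k` or `w = v - e_k`
for some coordinate `k`. -/
def adj (N m : ℕ) (v w : Fin N → ZMod m) : Prop :=
  ∃ k : Fin N, w = v + eV N m k ∨ w = v - eV N m k

/-- The `k`-th level of a vertex: `d_k(v) = min((v k).val, m - (v k).val)`. -/
def lev (N m : ℕ) (v : Fin N → ZMod m) (k : Fin N) : ℕ :=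
  min ((v k).val) (m - (v k).val)

/-- Path distance of a vertex to the origin: `d(v) = Σ_k d_k(v)`. -/
def distO (N m : ℕ) (v : Fin N → ZMod m) : ℕ :=
  ∑ k : Fin N, lev N m v k

open Classical in
/-- Adjacency operator: `(A f)(v) = Σ_{w ∼ v} f(w)`. -/
noncomputable def Aop (N m : ℕ) [NeZero m] (f : (Fin N → ZMod m) → ℂ) :
    (Fin N → ZMod m) → ℂ :=
  fun v => ∑ w : Fin N → ZMod m, if adj N m v w then f w else 0

open Classical in
/-- Outer adjacency: `(A₊ f)(v) = Σ_{w ∼ v, d(w) < d(v)} f(w)`. -/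
noncomputable def Aplus (N m : ℕ) [NeZero m] (f : (Fin N → ZMod m) → ℂ) :
    (Fin N → ZMod m) → ℂ :=
  fun v => ∑ w : Fin N → ZMod m,
    if adj N m v w ∧ distO N m w < distO N m v then f w else 0

open Classical in
/-- Inner adjacency: `(A₋ f)(v) = Σ_{w ∼ v, d(w) > d(v)} f(w)`. -/
noncomputable def Aminus (N m : ℕ) [NeZero m] (f : (Fin N → ZMod m) → ℂ) :
    (Fin N → ZMod m) → ℂ :=
  fun v => ∑ w : Fin N → ZMod m,
    if adj N m v w ∧ distO N m v < distO N m w then f w else 0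

open Classical in
/-- Neutral adjacency: `(A₀ f)(v) = Σ_{w ∼ v, d(w) = d(v)} f(w)`. -/
noncomputable def Azero (N m : ℕ) [NeZero m] (f : (Fin N → ZMod m) → ℂ) :
    (Fin N → ZMod m) → ℂ :=
  fun v => ∑ w : Fin N → ZMod m,
    if adj N m v w ∧ distO N m w = distO N m v then f w else 0

/-- The `k`-reflection `ṽ_k` of a vertex: negate the `k`-th coordinate. -/
def reflV (N m : ℕ) (k : Fin N) (v : Fin N → ZMod m) : Fin N → ZMod m :=
  Function.update v k (-(v k))

/-- Level-one reflection sum: `(R₁ f)(v) = Σ_{k : d_k(v) = 1} f(ṽ_k)`. -/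
noncomputable def R1 (N m : ℕ) (f : (Fin N → ZMod m) → ℂ) :
    (Fin N → ZMod m) → ℂ :=
  fun v => ∑ k ∈ Finset.univ.filter (fun k => lev N m v k = 1), f (reflV N m k v)

/-- Number of coordinates of `v` at level `ℓ`. -/
def cardLev (N m : ℕ) (v : Fin N → ZMod m) (ℓ : ℕ) : ℕ :=
  (Finset.univ.filter (fun k => lev N m v k = ℓ)).card

open Classical in
/-- The subadjacency of `A₊` with target `Σ_{p',q'}`:
`g ↦ 𝟙_{Σ_{p',q'}} ⬝ (A₊ g)`. -/
noncomputable def subPlus (N p' q' : ℕ) (g : (Fin N → ZMod 5) → ℂ) :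
    (Fin N → ZMod 5) → ℂ :=
  fun v => if cardLev N 5 v 1 = p' ∧ cardLev N 5 v 2 = q'
    then Aplus N 5 g v else 0

/-- The set of generating operators: `A₀` together with all subadjacencies of `A₊`. -/
def Gops (N : ℕ) : Set (((Fin N → ZMod 5) → ℂ) → ((Fin N → ZMod 5) → ℂ)) :=
  {T | T = Azero N 5 ∨ ∃ p' q' : ℕ, T = subPlus N p' q'}

/-- `W_{p,q,λ,0}`: vertex functions supported in `Σ_{p,q}`, in the kernel of `A₋`,
that are `λ`-eigenvectors of `R₁` and eigenvectors of `A₀`. -/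
def W5 (N p q : ℕ) (lam : ℂ) : Set ((Fin N → ZMod 5) → ℂ) :=
  {f | (∀ v, ¬(cardLev N 5 v 1 = p ∧ cardLev N 5 v 2 = q) → f v = 0) ∧
       Aminus N 5 f = 0 ∧ R1 N 5 f = lam • f ∧ ∃ μ : ℂ, Azero N 5 f = μ • f}

/-- `V_{p,q,λ}`: the span of all images of elements of `W_{p,q,λ,0}` under finite
compositions of operators from `Gops`. -/
noncomputable def V5 (N p q : ℕ) (lam : ℂ) : Submodule ℂ ((Fin N → ZMod 5) → ℂ) :=
  Submodule.span ℂ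
    {g | ∃ L : List (((Fin N → ZMod 5) → ℂ) → ((Fin N → ZMod 5) → ℂ)),
      (∀ T ∈ L, T ∈ Gops N) ∧ ∃ f ∈ W5 N p q lam, g = L.foldr (fun T h => T h) f}

/-!
All operators involved act coordinatewise: `A₊`, `A₀`, `A₋` and `R₁` are `coordOp M` for integer
`5 × 5` matrices `M`, where `coordOp M = ∑ₖ 1 ⊗ ⋯ ⊗ M ⊗ ⋯ ⊗ 1`, and `M ↦ coordOp M` is a Lie algebra
homomorphism, so their commutators are computed with `5 × 5` matrices.

Each generator of `V_{p,q,λ}` is supported in a single `Σ_{p',q'}`, hence `V_{p,q,λ}` is stable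
under multiplication by functions of `(p', q')`. Together with `A₊ = ∑_{p',q'} 𝟙_{Σ_{p',q'}} A₊`
this makes `V_{p,q,λ}` stable under `A₀`, `A₊`, the two level blocks of `A₊` and the level
projections. As `A = A₊ + A₀ + A₋`, it remains to treat `A₋`, and one shows more: `coordOp M g`
lies in `V_{p,q,λ}` for every `g ∈ V_{p,q,λ}` and each of six local matrices `M`, among them the two
blocks of `A₋`. This holds on `W_{p,q,λ,0}` by its defining equations; it survives `𝟙_{Σ_{p',q'}}`
because a level-homogeneous matrix shifts `(p', q')` by a fixed amount, and it survives `A₀` and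
`A₊` because their commutators with the six matrices are integer combinations of these and of
matrices preserving `V_{p,q,λ}`.
-/

open Function

namespace TorusGraph

section CoordOp

variable {ι α : Type*} (R : Type*) [Fintype ι] [DecidableEq ι] [Fintype α] [DecidableEq α]
  [CommRing R]

def siteOp (k : ι) : Matrix α α ℤ →+* Module.End R ((ι → α) → R) where
  toFun M :=
    { toFun := fun f v => ∑ t, (M (v k) t : R) * f (update v k t)
      map_add' := fun f g => by ext v; simp [mul_add, sum_add_distrib]
      map_smul' := fun c f => by ext v; simp [mul_sum, mul_left_comm] }
  map_one' := by
    ext f v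
    simp [Matrix.one_apply]
  map_mul' M M' := by
    refine LinearMap.ext fun f => funext fun v => ?_
    show ∑ t, ((M * M') (v k) t : R) * f (update v k t) =
      ∑ s, (M (v k) s : R) * ∑ t, (M' (update v k s k) t : R) * f (update (update v k s) k t)
    simp only [update_self, update_idem, Matrix.mul_apply, Int.cast_sum, Int.cast_mul, sum_mul,
      mul_sum, mul_assoc]
    exact sum_comm
  map_zero' := by ext f v; simp
  map_add' M M' := by ext f v; simp [add_mul, sum_add_distrib]

variable {R}

theorem siteOp_apply (k : ι) (M : Matrix α α ℤ) (f : (ι → α) → R) (v : ι → α) :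
    siteOp R k M f v = ∑ t, (M (v k) t : R) * f (update v k t) := rfl

theorem commute_siteOp {k j : ι} (hkj : k ≠ j) (M M' : Matrix α α ℤ) :
    Commute (siteOp R k M) (siteOp R j M') := by
  refine LinearMap.ext fun f => funext fun v => ?_
  simp only [Module.End.mul_apply, siteOp_apply, update_of_ne hkj, update_of_ne hkj.symm,
    mul_sum]
  rw [sum_comm]
  refine sum_congr rfl fun s _ => sum_congr rfl fun t _ => ?_
  rw [update_comm hkj, mul_left_comm]

variable (R) in
def coordOp : Matrix α α ℤ →+ Module.End R ((ι → α) → R) :=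
  ∑ k, (siteOp R k).toAddMonoidHom

theorem coordOp_apply (M : Matrix α α ℤ) (f : (ι → α) → R) (v : ι → α) :
    coordOp R M f v = ∑ k, ∑ t, (M (v k) t : R) * f (update v k t) := by
  simp [coordOp, siteOp_apply]

theorem coordOp_lie (M M' : Matrix α α ℤ) :
    (coordOp R ⁅M, M'⁆ : Module.End R ((ι → α) → R)) =
      ⁅(coordOp R M : Module.End R ((ι → α) → R)), coordOp R M'⁆ := by
  simp only [coordOp, AddMonoidHom.finsetSum_apply, RingHom.toAddMonoidHom_eq_coe,
    AddMonoidHom.coe_coe, Ring.lie_def, map_sub, map_mul, sum_mul_sum]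
  rw [sum_comm (s := univ) (t := univ) (f := fun j k : ι =>
    (siteOp R j M' * siteOp R k M : Module.End R ((ι → α) → R)))]
  simp only [← sum_sub_distrib]
  refine sum_congr rfl fun k _ => ?_
  rw [sum_eq_single k (fun j _ hjk => ?_) (absurd (mem_univ k))]
  rw [(commute_siteOp (Ne.symm hjk) M M').eq, sub_self]

theorem coordOp_lie_apply (M M' : Matrix α α ℤ) (f : (ι → α) → R) :
    coordOp R ⁅M, M'⁆ f = coordOp R M (coordOp R M' f) - coordOp R M' (coordOp R M f) := by
  rw [coordOp_lie, Ring.lie_def]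
  rfl

theorem coordOp_one (f : (ι → α) → R) :
    coordOp R (1 : Matrix α α ℤ) f = Fintype.card ι • f := by
  simp [coordOp]

theorem coordOp_diagonal (d : α → ℤ) (f : (ι → α) → R) (v : ι → α) :
    coordOp R (Matrix.diagonal d) f v = (∑ k, d (v k) : R) * f v := by
  simp [coordOp_apply, Matrix.diagonal_apply, sum_mul]

end CoordOp

section Levels

variable {N m : ℕ}

theorem lev_eq_natAbs_valMinAbs [NeZero m] (v : Fin N → ZMod m) (k : Fin N) :
    lev N m v k = (v k).valMinAbs.natAbs :=
  (ZMod.valMinAbs_natAbs_eq_min _).symm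

theorem sum_comp_update_add {ι β M : Type*} [Fintype ι] [DecidableEq ι] [AddCommMonoid M]
    (φ : β → M) (v : ι → β) (k : ι) (t : β) :
    ∑ j, φ (update v k t j) + φ (v k) = ∑ j, φ (v j) + φ t := by
  rw [Fintype.sum_eq_add_sum_compl k, Fintype.sum_eq_add_sum_compl k (fun j => φ (v j)),
    update_self, sum_congr rfl fun j hj => by rw [update_of_ne (by simpa using hj)]]
  abel

theorem distO_update [NeZero m] (v : Fin N → ZMod m) (k : Fin N) (t : ZMod m) :
    distO N m (update v k t) + (v k).valMinAbs.natAbs = distO N m v + t.valMinAbs.natAbs := by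
  simpa only [distO, lev_eq_natAbs_valMinAbs] using
    sum_comp_update_add (fun x : ZMod m => x.valMinAbs.natAbs) v k t

/-- `v ∈ Σ_{p,q}` iff `profile v = (p, q)`. -/
def profile (v : Fin N → ZMod m) : ℕ × ℕ := (cardLev N m v 1, cardLev N m v 2)

def unitProfile (ℓ : ℕ) : ℕ × ℕ := (if ℓ = 1 then 1 else 0, if ℓ = 2 then 1 else 0)

theorem cardLev_eq_sum [NeZero m] (v : Fin N → ZMod m) (ℓ : ℕ) :
    cardLev N m v ℓ = ∑ j, if (v j).valMinAbs.natAbs = ℓ then 1 else 0 := by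
  simp only [cardLev, card_filter, lev_eq_natAbs_valMinAbs]

theorem profile_update [NeZero m] (v : Fin N → ZMod m) (k : Fin N) (t : ZMod m) :
    profile (update v k t) + unitProfile (v k).valMinAbs.natAbs =
      profile v + unitProfile t.valMinAbs.natAbs := by
  simp only [profile, unitProfile, cardLev_eq_sum, Prod.mk_add_mk, Prod.mk.injEq]
  exact ⟨sum_comp_update_add (fun x : ZMod m => if x.valMinAbs.natAbs = 1 then 1 else 0) v k t,
    sum_comp_update_add (fun x : ZMod m => if x.valMinAbs.natAbs = 2 then 1 else 0) v k t⟩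

theorem add_eV (v : Fin N → ZMod m) (k : Fin N) : v + eV N m k = update v k (v k + 1) := by
  ext j
  by_cases h : j = k <;> simp [eV, h]

theorem sub_eV (v : Fin N → ZMod m) (k : Fin N) : v - eV N m k = update v k (v k - 1) := by
  ext j
  by_cases h : j = k <;> simp [eV, h]

theorem adj_iff (v w : Fin N → ZMod m) :
    adj N m v w ↔ ∃ k, ∃ t ∈ ({v k + 1, v k - 1} : Finset (ZMod m)), update v k t = w := by
  simp only [adj, add_eV, sub_eV, mem_insert, mem_singleton]
  constructor
  · rintro ⟨k, rfl | rfl⟩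
    exacts [⟨k, _, Or.inl rfl, rfl⟩, ⟨k, _, Or.inr rfl, rfl⟩]
  · rintro ⟨k, t, rfl | rfl, rfl⟩
    exacts [⟨k, Or.inl rfl⟩, ⟨k, Or.inr rfl⟩]

open Classical in
theorem sum_adj_ite [NeZero m] {β : Type*} [AddCommMonoid β] (h1 : (1 : ZMod m) ≠ 0)
    (P : (Fin N → ZMod m) → Prop) [DecidablePred P] (F : (Fin N → ZMod m) → β)
    (v : Fin N → ZMod m) :
    ∑ w, (if adj N m v w ∧ P w then F w else 0) =
      ∑ k, ∑ t ∈ ({v k + 1, v k - 1} : Finset (ZMod m)),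
        if P (update v k t) then F (update v k t) else 0 := by
  have hne : ∀ k, ∀ t ∈ ({v k + 1, v k - 1} : Finset (ZMod m)), t ≠ v k := by
    simp only [mem_insert, mem_singleton]
    rintro k t (rfl | rfl) h
    exacts [h1 (by simpa using h), h1 (by simpa using h)]
  have hinj : Set.InjOn (fun σ : Σ _ : Fin N, ZMod m => update v σ.1 σ.2)
      (univ.sigma fun k => ({v k + 1, v k - 1} : Finset (ZMod m))) := by
    rintro ⟨k, t⟩ hkt ⟨j, s⟩ hjs (h : update v k t = update v j s)
    simp only [coe_sigma, Set.mem_sigma_iff, coe_univ, Set.mem_univ, true_and, mem_coe] at hkt hjs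
    obtain rfl : k = j := by
      by_contra hkj
      exact hne k t hkt (by simpa [update_of_ne hkj] using congrFun h k)
    simpa using congrFun h k
  have himage : univ.filter (adj N m v) =
      (univ.sigma fun k => ({v k + 1, v k - 1} : Finset (ZMod m))).image
        fun σ => update v σ.1 σ.2 := by
    ext w
    simp only [mem_filter, mem_univ, true_and, adj_iff, mem_image, mem_sigma, Sigma.exists]
  simp_rw [ite_and]
  rw [← sum_filter, himage, sum_image hinj, sum_sigma]

end Levels

section Operators

variable {N m : ℕ}

def stepMatrix (r : ℕ → ℕ → Prop) [DecidableRel r] : Matrix (ZMod m) (ZMod m) ℤ :=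
  Matrix.of fun x t =>
    if t ∈ ({x + 1, x - 1} : Finset (ZMod m)) ∧ r t.valMinAbs.natAbs x.valMinAbs.natAbs then 1
    else 0

open Classical in
theorem sum_adj_distO_eq_coordOp [NeZero m] (h1 : (1 : ZMod m) ≠ 0) (r : ℕ → ℕ → Prop)
    [DecidableRel r] (hr : ∀ a b c, r (a + c) (b + c) ↔ r a b) (f : (Fin N → ZMod m) → ℂ)
    (v : Fin N → ZMod m) :
    ∑ w, (if adj N m v w ∧ r (distO N m w) (distO N m v) then f w else 0) =
      coordOp ℂ (stepMatrix r) f v := by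
  rw [sum_adj_ite h1, coordOp_apply]
  refine sum_congr rfl fun k _ => ?_
  simp only [stepMatrix, Matrix.of_apply, Int.cast_ite, Int.cast_one, Int.cast_zero, ite_mul,
    one_mul, zero_mul, ite_and, sum_ite_mem, univ_inter]
  refine sum_congr rfl fun t _ => if_congr ?_ rfl rfl
  rw [← hr _ _ (v k).valMinAbs.natAbs, distO_update, add_comm, add_comm (distO N m v), hr]

theorem Aplus_eq_coordOp [NeZero m] (h1 : (1 : ZMod m) ≠ 0) (f : (Fin N → ZMod m) → ℂ) :
    Aplus N m f = coordOp ℂ (stepMatrix (· < ·)) f :=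
  funext <| sum_adj_distO_eq_coordOp h1 _ (fun _ _ _ => Nat.add_lt_add_iff_right) f

theorem Azero_eq_coordOp [NeZero m] (h1 : (1 : ZMod m) ≠ 0) (f : (Fin N → ZMod m) → ℂ) :
    Azero N m f = coordOp ℂ (stepMatrix (· = ·)) f :=
  funext <| sum_adj_distO_eq_coordOp h1 _ (fun _ _ _ => add_left_inj _) f

theorem Aminus_eq_coordOp [NeZero m] (h1 : (1 : ZMod m) ≠ 0) (f : (Fin N → ZMod m) → ℂ) :
    Aminus N m f = coordOp ℂ (stepMatrix fun a b => b < a) f :=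
  funext <|
    sum_adj_distO_eq_coordOp h1 (fun a b => b < a) (fun _ _ _ => Nat.add_lt_add_iff_right) f

theorem Aop_eq_add [NeZero m] (f : (Fin N → ZMod m) → ℂ) :
    Aop N m f = Aplus N m f + Azero N m f + Aminus N m f := by
  funext v
  simp only [Aop, Aplus, Azero, Aminus, Pi.add_apply, ← sum_add_distrib]
  refine sum_congr rfl fun w _ => ?_
  split_ifs <;> simp_all <;> omega

def reflMatrix : Matrix (ZMod m) (ZMod m) ℤ :=
  Matrix.of fun x t => if x.valMinAbs.natAbs = 1 ∧ t = -x then 1 else 0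

theorem R1_eq_coordOp [NeZero m] (f : (Fin N → ZMod m) → ℂ) :
    R1 N m f = coordOp ℂ reflMatrix f := by
  funext v
  simp [R1, coordOp_apply, reflMatrix, reflV, sum_filter, lev_eq_natAbs_valMinAbs, ite_and]

def levelProj (ℓ : ℕ) : Matrix (ZMod m) (ZMod m) ℤ :=
  Matrix.diagonal fun x => if x.valMinAbs.natAbs = ℓ then 1 else 0

theorem coordOp_levelProj [NeZero m] (ℓ : ℕ) (f : (Fin N → ZMod m) → ℂ) (v : Fin N → ZMod m) :
    coordOp ℂ (levelProj ℓ) f v = cardLev N m v ℓ * f v := by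
  simp [levelProj, coordOp_diagonal, cardLev_eq_sum]

def LevelHomogeneous (M : Matrix (ZMod m) (ZMod m) ℤ) (a b : ℕ) : Prop :=
  ∀ x t, M x t ≠ 0 → x.valMinAbs.natAbs = a ∧ t.valMinAbs.natAbs = b

theorem coordOp_indicator_profile [NeZero m] {M : Matrix (ZMod m) (ZMod m) ℤ} {a b : ℕ}
    (hM : LevelHomogeneous M a b) (c : ℕ × ℕ) (y : (Fin N → ZMod m) → ℂ) :
    coordOp ℂ M ((profile ⁻¹' {c}).indicator y) =
      (profile ⁻¹' {c' | c + unitProfile a = c' + unitProfile b}).indicator (coordOp ℂ M y) := by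
  funext v
  have key : ∀ k t, M (v k) t ≠ 0 → (update v k t ∈ profile ⁻¹' {c} ↔
      v ∈ profile ⁻¹' {c' | c + unitProfile a = c' + unitProfile b}) := by
    intro k t hkt
    obtain ⟨ha, hb⟩ := hM _ _ hkt
    have h := profile_update v k t
    rw [ha, hb] at h
    simp only [Set.mem_preimage, Set.mem_singleton_iff, Set.mem_ofPred_eq]
    exact ⟨fun hc => hc ▸ h, fun hc => add_right_cancel (h.trans hc.symm)⟩
  rw [coordOp_apply]
  by_cases hv : v ∈ profile ⁻¹' {c' | c + unitProfile a = c' + unitProfile b}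
  · rw [Set.indicator_of_mem hv, coordOp_apply]
    refine sum_congr rfl fun k _ => sum_congr rfl fun t _ => ?_
    by_cases hz : M (v k) t = 0
    · simp [hz]
    · rw [Set.indicator_of_mem ((key k t hz).mpr hv)]
  · rw [Set.indicator_of_notMem hv]
    refine sum_eq_zero fun k _ => sum_eq_zero fun t _ => ?_
    by_cases hz : M (v k) t = 0
    · simp [hz]
    · rw [Set.indicator_of_notMem (mt (key k t hz).mp hv), mul_zero]

theorem support_coordOp_subset [NeZero m] {M : Matrix (ZMod m) (ZMod m) ℤ} {a b : ℕ}
    (hM : LevelHomogeneous M a b) {c : ℕ × ℕ} {y : (Fin N → ZMod m) → ℂ}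
    (hy : support y ⊆ profile ⁻¹' {c}) :
    support (coordOp ℂ M y) ⊆ profile ⁻¹' {c' | c + unitProfile a = c' + unitProfile b} := by
  rw [← Set.indicator_eq_self.mpr hy, coordOp_indicator_profile hM]
  exact Set.support_indicator_subset

theorem indicator_coordOp_add [NeZero m] {M₁ M₂ : Matrix (ZMod m) (ZMod m) ℤ}
    {a₁ b₁ a₂ b₂ : ℕ} (h₁ : LevelHomogeneous M₁ a₁ b₁) (h₂ : LevelHomogeneous M₂ a₂ b₂)
    {c : ℕ × ℕ} (hdisj : ∀ c', c + unitProfile a₁ = c' + unitProfile b₁ →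
      c + unitProfile a₂ ≠ c' + unitProfile b₂)
    {y : (Fin N → ZMod m) → ℂ} (hy : support y ⊆ profile ⁻¹' {c}) :
    (profile ⁻¹' {c' | c + unitProfile a₁ = c' + unitProfile b₁}).indicator
      (coordOp ℂ (M₁ + M₂) y) = coordOp ℂ M₁ y := by
  have hdisj' : Disjoint (support (coordOp ℂ M₂ y))
      (profile ⁻¹' {c' | c + unitProfile a₁ = c' + unitProfile b₁}) :=
    Set.disjoint_left.mpr fun v hv₂ hv₁ => hdisj _ hv₁ (support_coordOp_subset h₂ hy hv₂)
  rw [map_add, LinearMap.add_apply, Set.indicator_add',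
    Set.indicator_eq_self.mpr (support_coordOp_subset h₁ hy), Set.indicator_eq_zero'.mpr hdisj',
    add_zero]

def profileMul (φ : ℕ × ℕ → ℂ) : Module.End ℂ ((Fin N → ZMod m) → ℂ) :=
  LinearMap.mulLeft ℂ fun v => φ (profile v)

theorem profileMul_apply (φ : ℕ × ℕ → ℂ) (g : (Fin N → ZMod m) → ℂ) (v : Fin N → ZMod m) :
    profileMul φ g v = φ (profile v) * g v := rfl

theorem indicator_profile_eq_profileMul (s : Set (ℕ × ℕ)) (g : (Fin N → ZMod m) → ℂ) :
    (profile ⁻¹' s).indicator g = profileMul (s.indicator 1) g := by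
  funext v
  by_cases h : profile v ∈ s <;> simp [profileMul_apply, h]

theorem sum_indicator_profile [NeZero m] (h : (Fin N → ZMod m) → ℂ) :
    ∑ c ∈ (univ : Finset (Fin N → ZMod m)).image profile, (profile ⁻¹' {c}).indicator h = h := by
  classical
  funext v
  simp only [Finset.sum_apply, Set.indicator_apply, Set.mem_preimage, Set.mem_singleton_iff]
  rw [sum_ite_eq, if_pos (mem_image_of_mem _ (mem_univ v))]

end Operators

section LocalMatrices

variable {m : ℕ}

/-- For `m = 5` the vertices of level `ℓ` are `±ℓ`; `straight x y` sends `±x` to `±y`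
with the same sign, `cross x y` with the opposite one. -/
def straight (x y : ZMod m) : Matrix (ZMod m) (ZMod m) ℤ :=
  Matrix.single x y 1 + Matrix.single (-x) (-y) 1

def cross (x y : ZMod m) : Matrix (ZMod m) (ZMod m) ℤ :=
  Matrix.single x (-y) 1 + Matrix.single (-x) y 1

theorem levelHomogeneous_straight (x y : ZMod m) :
    LevelHomogeneous (straight x y) x.valMinAbs.natAbs y.valMinAbs.natAbs := by
  intro i j h
  simp only [straight, Matrix.add_apply, Matrix.single_apply] at h
  by_cases h₁ : x = i ∧ y = j
  · obtain ⟨rfl, rfl⟩ := h₁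
    exact ⟨rfl, rfl⟩
  by_cases h₂ : -x = i ∧ -y = j
  · obtain ⟨rfl, rfl⟩ := h₂
    exact ⟨ZMod.natAbs_valMinAbs_neg x, ZMod.natAbs_valMinAbs_neg y⟩
  simp [h₁, h₂] at h

theorem levelHomogeneous_cross (x y : ZMod m) :
    LevelHomogeneous (cross x y) x.valMinAbs.natAbs y.valMinAbs.natAbs := by
  intro i j h
  simp only [cross, Matrix.add_apply, Matrix.single_apply] at h
  by_cases h₁ : x = i ∧ -y = j
  · obtain ⟨rfl, rfl⟩ := h₁
    exact ⟨rfl, ZMod.natAbs_valMinAbs_neg y⟩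
  by_cases h₂ : -x = i ∧ y = j
  · obtain ⟨rfl, rfl⟩ := h₂
    exact ⟨ZMod.natAbs_valMinAbs_neg x, rfl⟩
  simp [h₁, h₂] at h

end LocalMatrices

section Five

local notation "M₅" => Matrix (ZMod 5) (ZMod 5) ℤ

variable {N p q : ℕ} {lam : ℂ}

theorem Aplus_five (f : (Fin N → ZMod 5) → ℂ) :
    Aplus N 5 f = coordOp ℂ (straight 1 0 + straight 2 1) f := by
  rw [Aplus_eq_coordOp (by decide)]
  congr 2
  decide

theorem Azero_five (f : (Fin N → ZMod 5) → ℂ) : Azero N 5 f = coordOp ℂ (cross 2 2) f := by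
  rw [Azero_eq_coordOp (by decide)]
  congr 2
  decide

theorem Aminus_five (f : (Fin N → ZMod 5) → ℂ) :
    Aminus N 5 f = coordOp ℂ (straight 0 1 + straight 1 2) f := by
  rw [Aminus_eq_coordOp (by decide)]
  congr 2
  decide

theorem R1_five (f : (Fin N → ZMod 5) → ℂ) : R1 N 5 f = coordOp ℂ (cross 1 1) f := by
  rw [R1_eq_coordOp]
  congr 2
  decide

theorem subPlus_eq_indicator (p' q' : ℕ) (g : (Fin N → ZMod 5) → ℂ) :
    subPlus N p' q' g = (profile ⁻¹' {(p', q')}).indicator (Aplus N 5 g) := by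
  classical
  funext v
  rw [Set.indicator_apply]
  exact if_congr (by simp [profile, Prod.ext_iff]) rfl rfl

theorem exists_linearMap_of_mem_Gops {T : ((Fin N → ZMod 5) → ℂ) → ((Fin N → ZMod 5) → ℂ)}
    (hT : T ∈ Gops N) : ∃ T' : Module.End ℂ ((Fin N → ZMod 5) → ℂ), ⇑T' = T := by
  rcases hT with rfl | ⟨p', q', rfl⟩
  · exact ⟨coordOp ℂ (cross 2 2), funext fun f => (Azero_five f).symm⟩
  · refine ⟨profileMul (({(p', q')} : Set (ℕ × ℕ)).indicator 1) ∘ₗ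
      coordOp ℂ (straight 1 0 + straight 2 1), funext fun g => ?_⟩
    rw [subPlus_eq_indicator, indicator_profile_eq_profileMul, Aplus_five]
    rfl

theorem support_word_subset {L : List (((Fin N → ZMod 5) → ℂ) → ((Fin N → ZMod 5) → ℂ))}
    (hL : ∀ T ∈ L, T ∈ Gops N) {f : (Fin N → ZMod 5) → ℂ} (hf : f ∈ W5 N p q lam) :
    ∃ c, support (L.foldr (fun T h => T h) f) ⊆ profile ⁻¹' {c} := by
  induction L with
  | nil =>
    refine ⟨(p, q), fun v hv => ?_⟩
    by_contra hpq
    exact hv (hf.1 v (by simpa [profile, Prod.ext_iff] using hpq))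
  | cons T L ih =>
    obtain ⟨c, hc⟩ := ih fun T' h => hL T' (List.mem_cons_of_mem _ h)
    rcases hL T List.mem_cons_self with rfl | ⟨p', q', rfl⟩
    · refine ⟨c, ?_⟩
      rw [List.foldr_cons, funext Azero_five]
      refine (support_coordOp_subset (levelHomogeneous_cross (2 : ZMod 5) 2) hc).trans ?_
      exact fun v hv => add_right_cancel (Set.mem_preimage.mp hv).symm
    · refine ⟨(p', q'), ?_⟩
      rw [List.foldr_cons, subPlus_eq_indicator]
      exact Set.support_indicator_subset

theorem apply_mem_V5_of_mem_Gops {T : ((Fin N → ZMod 5) → ℂ) → ((Fin N → ZMod 5) → ℂ)}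
    (hT : T ∈ Gops N) {g : (Fin N → ZMod 5) → ℂ} (hg : g ∈ V5 N p q lam) :
    T g ∈ V5 N p q lam := by
  obtain ⟨T', rfl⟩ := exists_linearMap_of_mem_Gops hT
  refine (Submodule.span_le.mpr ?_ : V5 N p q lam ≤ (V5 N p q lam).comap T') hg
  rintro _ ⟨L, hL, f, hf, rfl⟩
  refine Submodule.subset_span ⟨T' :: L, fun T hT' => ?_, f, hf, rfl⟩
  rcases List.mem_cons.mp hT' with rfl | h
  exacts [hT, hL T h]

theorem V5_le_comap {T : Module.End ℂ ((Fin N → ZMod 5) → ℂ)}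
    (hT : ∀ x ∈ V5 N p q lam, ∀ c, support x ⊆ profile ⁻¹' {c} → T x ∈ V5 N p q lam) :
    V5 N p q lam ≤ (V5 N p q lam).comap T := by
  refine Submodule.span_le.mpr ?_
  rintro _ ⟨L, hL, f, hf, rfl⟩
  obtain ⟨c, hc⟩ := support_word_subset hL hf
  exact hT _ (Submodule.subset_span ⟨L, hL, f, hf, rfl⟩) c hc

theorem profileMul_mem_V5 (φ : ℕ × ℕ → ℂ) {g : (Fin N → ZMod 5) → ℂ}
    (hg : g ∈ V5 N p q lam) : profileMul φ g ∈ V5 N p q lam := by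
  refine V5_le_comap (fun x hx c hc => ?_) hg
  convert Submodule.smul_mem _ (φ c) hx using 1
  funext v
  by_cases hv : x v = 0
  · simp [profileMul_apply, hv]
  · simp [profileMul_apply, show profile v = c from hc hv]

theorem indicator_profile_mem_V5 (s : Set (ℕ × ℕ)) {g : (Fin N → ZMod 5) → ℂ}
    (hg : g ∈ V5 N p q lam) : (profile ⁻¹' s).indicator g ∈ V5 N p q lam := by
  rw [indicator_profile_eq_profileMul]
  exact profileMul_mem_V5 _ hg

theorem Aplus_mem_V5 {g : (Fin N → ZMod 5) → ℂ} (hg : g ∈ V5 N p q lam) :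
    Aplus N 5 g ∈ V5 N p q lam := by
  rw [← sum_indicator_profile (Aplus N 5 g)]
  refine Submodule.sum_mem _ fun c _ => ?_
  rw [← subPlus_eq_indicator]
  exact apply_mem_V5_of_mem_Gops (Or.inr ⟨c.1, c.2, rfl⟩) hg

theorem coordOp_straight_mem_V5 {g : (Fin N → ZMod 5) → ℂ} (hg : g ∈ V5 N p q lam) :
    coordOp ℂ (straight 1 0) g ∈ V5 N p q lam ∧ coordOp ℂ (straight 2 1) g ∈ V5 N p q lam := by
  have h10 : LevelHomogeneous (straight 1 0 : M₅) 1 0 := levelHomogeneous_straight 1 0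
  have h21 : LevelHomogeneous (straight 2 1 : M₅) 2 1 := levelHomogeneous_straight 2 1
  constructor
  · refine V5_le_comap (fun x hx c hc => ?_) hg
    rw [← indicator_coordOp_add h10 h21 ?_ hc, ← Aplus_five]
    · exact indicator_profile_mem_V5 _ (Aplus_mem_V5 hx)
    · intro c' h h'
      simp [unitProfile, Prod.ext_iff] at h h'
      omega
  · refine V5_le_comap (fun x hx c hc => ?_) hg
    rw [← indicator_coordOp_add h21 h10 ?_ hc, add_comm (straight 2 1), ← Aplus_five]
    · exact indicator_profile_mem_V5 _ (Aplus_mem_V5 hx)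
    · intro c' h h'
      simp [unitProfile, Prod.ext_iff] at h h'
      omega

def baseMatrices : Set M₅ :=
  {straight 1 0, straight 2 1, cross 2 2, 1, levelProj 1, levelProj 2}

def probeMatrices : Set M₅ :=
  {straight 0 1, straight 1 2, straight 2 0, cross 1 1, cross 1 2, cross 2 1}

theorem coordOp_mem_V5_of_mem_base {M : M₅} (hM : M ∈ baseMatrices)
    {g : (Fin N → ZMod 5) → ℂ} (hg : g ∈ V5 N p q lam) : coordOp ℂ M g ∈ V5 N p q lam := by
  rcases hM with rfl | rfl | rfl | rfl | rfl | rfl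
  · exact (coordOp_straight_mem_V5 hg).1
  · exact (coordOp_straight_mem_V5 hg).2
  · rw [← Azero_five]
    exact apply_mem_V5_of_mem_Gops (Or.inl rfl) hg
  · rw [coordOp_one]
    exact Submodule.smul_of_tower_mem _ _ hg
  · convert profileMul_mem_V5 (fun c => (c.1 : ℂ)) hg using 1
    funext v
    rw [coordOp_levelProj, profileMul_apply]
    rfl
  · convert profileMul_mem_V5 (fun c => (c.2 : ℂ)) hg using 1
    funext v
    rw [coordOp_levelProj, profileMul_apply]
    rfl

theorem lie_Azero_mem_closure :
    ∀ M ∈ probeMatrices, ⁅M, cross 2 2⁆ ∈ AddSubgroup.closure (probeMatrices ∪ baseMatrices) := by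
  have h : ∀ M ∈ probeMatrices ∪ baseMatrices,
      M ∈ AddSubgroup.closure (probeMatrices ∪ baseMatrices) :=
    fun M => (AddSubgroup.subset_closure ·)
  rintro M (rfl | rfl | rfl | rfl | rfl | rfl)
  · rw [show ⁅(straight 0 1 : M₅), (cross 2 2 : M₅)⁆ = 0 by decide]
    exact zero_mem _
  · rw [show ⁅(straight 1 2 : M₅), (cross 2 2 : M₅)⁆ = cross 1 2 by decide]
    exact h _ (by simp [probeMatrices])
  · rw [show ⁅(straight 2 0 : M₅), (cross 2 2 : M₅)⁆ = -straight 2 0 by decide]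
    exact neg_mem (h _ (by simp [probeMatrices]))
  · rw [show ⁅(cross 1 1 : M₅), (cross 2 2 : M₅)⁆ = 0 by decide]
    exact zero_mem _
  · rw [show ⁅(cross 1 2 : M₅), (cross 2 2 : M₅)⁆ = straight 1 2 by decide]
    exact h _ (by simp [probeMatrices])
  · rw [show ⁅(cross 2 1 : M₅), (cross 2 2 : M₅)⁆ = -straight 2 1 by decide]
    exact neg_mem (h _ (by simp [baseMatrices]))

theorem lie_Aplus_mem_closure :
    ∀ M ∈ probeMatrices, ⁅M, straight 1 0 + straight 2 1⁆ ∈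
      AddSubgroup.closure (probeMatrices ∪ baseMatrices) := by
  have h : ∀ M ∈ probeMatrices ∪ baseMatrices,
      M ∈ AddSubgroup.closure (probeMatrices ∪ baseMatrices) :=
    fun M => (AddSubgroup.subset_closure ·)
  rintro M (rfl | rfl | rfl | rfl | rfl | rfl)
  · rw [show ⁅(straight 0 1 : M₅), (straight 1 0 + straight 2 1 : M₅)⁆ =
      2 • 1 - 3 • levelProj 1 - 2 • levelProj 2 - cross 1 1 by decide]
    exact sub_mem (sub_mem (sub_mem (nsmul_mem (h _ (by simp [baseMatrices])) 2)
      (nsmul_mem (h _ (by simp [baseMatrices])) 3)) (nsmul_mem (h _ (by simp [baseMatrices])) 2))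
      (h _ (by simp [probeMatrices]))
  · rw [show ⁅(straight 1 2 : M₅), (straight 1 0 + straight 2 1 : M₅)⁆ =
      levelProj 1 - levelProj 2 by decide]
    exact sub_mem (h _ (by simp [baseMatrices])) (h _ (by simp [baseMatrices]))
  · rw [show ⁅(straight 2 0 : M₅), (straight 1 0 + straight 2 1 : M₅)⁆ = 0 by decide]
    exact zero_mem _
  · rw [show ⁅(cross 1 1 : M₅), (straight 1 0 + straight 2 1 : M₅)⁆ =
      straight 1 0 - cross 2 1 by decide]
    exact sub_mem (h _ (by simp [baseMatrices])) (h _ (by simp [probeMatrices]))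
  · rw [show ⁅(cross 1 2 : M₅), (straight 1 0 + straight 2 1 : M₅)⁆ =
      cross 1 1 - cross 2 2 by decide]
    exact sub_mem (h _ (by simp [probeMatrices])) (h _ (by simp [baseMatrices]))
  · rw [show ⁅(cross 2 1 : M₅), (straight 1 0 + straight 2 1 : M₅)⁆ = straight 2 0 by decide]
    exact h _ (by simp [probeMatrices])

/-- The matrices of `probeMatrices ∪ baseMatrices` span the local matrices commuting with
`x ↦ -x`, except for the block from level `0` to level `2`. -/
noncomputable def probedSubmodule (N p q : ℕ) (lam : ℂ) : Submodule ℂ ((Fin N → ZMod 5) → ℂ) :=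
  V5 N p q lam ⊓ ⨅ M ∈ probeMatrices, (V5 N p q lam).comap (coordOp ℂ M)

theorem mem_probedSubmodule {g : (Fin N → ZMod 5) → ℂ} :
    g ∈ probedSubmodule N p q lam ↔
      g ∈ V5 N p q lam ∧ ∀ M ∈ probeMatrices, coordOp ℂ M g ∈ V5 N p q lam := by
  simp [probedSubmodule]

theorem coordOp_mem_V5_of_mem_closure {g : (Fin N → ZMod 5) → ℂ}
    (hg : g ∈ probedSubmodule N p q lam) {M : M₅}
    (hM : M ∈ AddSubgroup.closure (probeMatrices ∪ baseMatrices)) :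
    coordOp ℂ M g ∈ V5 N p q lam := by
  rw [mem_probedSubmodule] at hg
  induction hM using AddSubgroup.closure_induction with
  | mem M hM => exact hM.elim (hg.2 M) (coordOp_mem_V5_of_mem_base · hg.1)
  | zero => simp
  | add M M' _ _ hM hM' => simpa using add_mem hM hM'
  | neg M _ hM => simpa using neg_mem hM

theorem coordOp_mem_probedSubmodule {X : M₅}
    (hX : ∀ g ∈ V5 N p q lam, coordOp ℂ X g ∈ V5 N p q lam)
    (hbr : ∀ M ∈ probeMatrices, ⁅M, X⁆ ∈ AddSubgroup.closure (probeMatrices ∪ baseMatrices))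
    {g : (Fin N → ZMod 5) → ℂ} (hg : g ∈ probedSubmodule N p q lam) :
    coordOp ℂ X g ∈ probedSubmodule N p q lam := by
  have hg' := mem_probedSubmodule.mp hg
  refine mem_probedSubmodule.mpr ⟨hX g hg'.1, fun M hM => ?_⟩
  rw [← sub_add_cancel (coordOp ℂ M (coordOp ℂ X g)) (coordOp ℂ X (coordOp ℂ M g)),
    ← coordOp_lie_apply]
  exact add_mem (coordOp_mem_V5_of_mem_closure hg (hbr M hM)) (hX _ (hg'.2 M hM))

theorem indicator_profile_mem_probedSubmodule (c : ℕ × ℕ) {g : (Fin N → ZMod 5) → ℂ}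
    (hg : g ∈ probedSubmodule N p q lam) :
    (profile ⁻¹' {c}).indicator g ∈ probedSubmodule N p q lam := by
  rw [mem_probedSubmodule] at hg ⊢
  refine ⟨indicator_profile_mem_V5 _ hg.1, fun M hM => ?_⟩
  obtain ⟨a, b, hab⟩ : ∃ a b, LevelHomogeneous M a b := by
    rcases hM with rfl | rfl | rfl | rfl | rfl | rfl
    exacts [⟨_, _, levelHomogeneous_straight _ _⟩, ⟨_, _, levelHomogeneous_straight _ _⟩,
      ⟨_, _, levelHomogeneous_straight _ _⟩, ⟨_, _, levelHomogeneous_cross _ _⟩,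
      ⟨_, _, levelHomogeneous_cross _ _⟩, ⟨_, _, levelHomogeneous_cross _ _⟩]
  rw [coordOp_indicator_profile hab]
  exact indicator_profile_mem_V5 _ (hg.2 M hM)

theorem Azero_mem_probedSubmodule {g : (Fin N → ZMod 5) → ℂ}
    (hg : g ∈ probedSubmodule N p q lam) : Azero N 5 g ∈ probedSubmodule N p q lam := by
  rw [Azero_five]
  exact coordOp_mem_probedSubmodule (fun _ => coordOp_mem_V5_of_mem_base (by simp [baseMatrices]))
    lie_Azero_mem_closure hg

theorem subPlus_mem_probedSubmodule (p' q' : ℕ) {g : (Fin N → ZMod 5) → ℂ}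
    (hg : g ∈ probedSubmodule N p q lam) : subPlus N p' q' g ∈ probedSubmodule N p q lam := by
  rw [subPlus_eq_indicator, Aplus_five]
  refine indicator_profile_mem_probedSubmodule _ (coordOp_mem_probedSubmodule (fun g hg => ?_)
    lie_Aplus_mem_closure hg)
  rw [map_add, LinearMap.add_apply]
  exact add_mem (coordOp_straight_mem_V5 hg).1 (coordOp_straight_mem_V5 hg).2

theorem coordOp_straight_eq_zero_of_Aminus_eq_zero {f : (Fin N → ZMod 5) → ℂ} {c : ℕ × ℕ}
    (hc : support f ⊆ profile ⁻¹' {c}) (hf : Aminus N 5 f = 0) :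
    coordOp ℂ (straight 0 1) f = 0 ∧ coordOp ℂ (straight 1 2) f = 0 := by
  have h01 : LevelHomogeneous (straight 0 1 : M₅) 0 1 := levelHomogeneous_straight 0 1
  have h12 : LevelHomogeneous (straight 1 2 : M₅) 1 2 := levelHomogeneous_straight 1 2
  rw [Aminus_five] at hf
  have hzero : coordOp ℂ (straight 0 1) f = 0 := by
    rw [← indicator_coordOp_add h01 h12 ?_ hc, hf, Set.indicator_zero']
    intro c' h h'
    simp [unitProfile, Prod.ext_iff] at h h'
    omega
  rw [map_add, LinearMap.add_apply, hzero, zero_add] at hf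
  exact ⟨hzero, hf⟩

theorem mem_probedSubmodule_of_mem_W5 {f : (Fin N → ZMod 5) → ℂ} (hf : f ∈ W5 N p q lam) :
    f ∈ probedSubmodule N p q lam := by
  have hfV : f ∈ V5 N p q lam := Submodule.subset_span ⟨[], by simp, f, hf, rfl⟩
  obtain ⟨c, hc⟩ : ∃ c, support f ⊆ profile ⁻¹' {c} := support_word_subset (L := []) (by simp) hf
  obtain ⟨-, hAm, hR1, μ, hAz⟩ := hf
  obtain ⟨h01, h12⟩ := coordOp_straight_eq_zero_of_Aminus_eq_zero hc hAm
  have hS : coordOp ℂ (cross 1 1) f = lam • f := by rw [← R1_five, hR1]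
  have hN : coordOp ℂ (cross 2 2) f = μ • f := by rw [← Azero_five, hAz]
  have hbase : ∀ M ∈ baseMatrices, ∀ g ∈ V5 N p q lam, coordOp ℂ M g ∈ V5 N p q lam :=
    fun M hM g hg => coordOp_mem_V5_of_mem_base hM hg
  refine mem_probedSubmodule.mpr ⟨hfV, ?_⟩
  rintro M (rfl | rfl | rfl | rfl | rfl | rfl)
  · rw [h01]
    exact zero_mem _
  · rw [h12]
    exact zero_mem _
  · rw [show (straight 2 0 : M₅) = ⁅(straight 2 1 : M₅), (straight 1 0 : M₅)⁆ by decide,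
      coordOp_lie_apply]
    exact sub_mem (hbase _ (by simp [baseMatrices]) _ (hbase _ (by simp [baseMatrices]) _ hfV))
      (hbase _ (by simp [baseMatrices]) _ (hbase _ (by simp [baseMatrices]) _ hfV))
  · rw [hS]
    exact Submodule.smul_mem _ _ hfV
  · rw [show (cross 1 2 : M₅) =
        ⁅(cross 1 1 : M₅), (straight 0 1 + straight 1 2 : M₅)⁆ + straight 0 1 by decide,
      map_add, LinearMap.add_apply, coordOp_lie_apply, hS, map_smul, map_add,
      LinearMap.add_apply, h01, h12]
    simp
  · rw [show (cross 2 1 : M₅) = ⁅(cross 2 2 : M₅), (straight 2 1 : M₅)⁆ by decide,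
      coordOp_lie_apply, hN, map_smul]
    exact sub_mem (hbase _ (by simp [baseMatrices]) _ (hbase _ (by simp [baseMatrices]) _ hfV))
      (Submodule.smul_mem _ _ (hbase _ (by simp [baseMatrices]) _ hfV))

theorem V5_le_probedSubmodule : V5 N p q lam ≤ probedSubmodule N p q lam := by
  refine Submodule.span_le.mpr ?_
  rintro _ ⟨L, hL, f, hf, rfl⟩
  induction L with
  | nil => exact mem_probedSubmodule_of_mem_W5 hf
  | cons T L ih =>
    have ih := ih fun T' h => hL T' (List.mem_cons_of_mem _ h)
    rcases hL T List.mem_cons_self with rfl | ⟨p', q', rfl⟩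
    exacts [Azero_mem_probedSubmodule ih, subPlus_mem_probedSubmodule p' q' ih]

end Five

end TorusGraph

open TorusGraph in
theorem adjacency_invariant_C5_general (N p q : ℕ) (lam : ℂ) :
    ∀ g ∈ V5 N p q lam, Aop N 5 g ∈ V5 N p q lam := by
  intro g hg
  obtain ⟨-, hprobe⟩ := mem_probedSubmodule.mp (V5_le_probedSubmodule hg)
  rw [Aop_eq_add, Aminus_five, map_add, LinearMap.add_apply]
  exact add_mem (add_mem (Aplus_mem_V5 hg) (apply_mem_V5_of_mem_Gops (Or.inl rfl) hg))
    (add_mem (hprobe _ (by simp [probeMatrices])) (hprobe _ (by simp [probeMatrices])))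

/-- `V_{p,q,λ}` is invariant under the adjacency operator on `C_5^N`. -/
theorem adjacency_invariant_C5 (N p q : ℕ) (hN : 1 ≤ N) (lam : ℂ) :
    ∀ g ∈ V5 N p q lam, Aop N 5 g ∈ V5 N p q lam :=
  adjacency_invariant_C5_general N p q lam
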